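/- arXiv:2303.03237 — 2 statements merged into one kernel-verified Lean document; each statement's English description precedes it below -/
import Mathlib

section
/- Let d ≥ 1, X = [0,1]^d, let f, g : X → ℝ be bounded and measurable with f(x) ≤ g(x) for all x ∈ X, let n ∈ ℕ, and set p_R := (1 − Z_f/Z_g)^n. Define the probability measure P̃ := (1 − p_R)·P_f + p_R·P_g (the output distribution of rejection sampling with proposal P_g limited to n trials). Then: (i) p_R ≤ exp(−n·Z_f/Z_g); (ii) D_TV(P_f, P̃) = p_R · D_TV(P_f, P_g); (iii) D_suplog(P_f, P̃) ≤ min{ D_suplog(P_f, P_g), p_R·(exp(D_suplog(P_f, P_g)) − 1) }. -/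
open MeasureTheory Real

noncomputable section

/-- The unit cube `[0,1]^d` in `ℝ^d`. -/
def cube (d : ℕ) : Set (Fin d → ℝ) := Set.Icc 0 1

/-- The partition function `Z_f = ∫_X exp(f(x)) dx`. -/
def partZ {d : ℕ} (f : (Fin d → ℝ) → ℝ) : ℝ := ∫ x in cube d, Real.exp (f x)

/-- The log-partition function `L_f = log Z_f`. -/
def logPart {d : ℕ} (f : (Fin d → ℝ) → ℝ) : ℝ := Real.log (partZ f)

/-- The Gibbs measure `P_f` with density `exp(f(x))/Z_f` w.r.t. Lebesgue measure on the cube. -/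
def gibbs {d : ℕ} (f : (Fin d → ℝ) → ℝ) : Measure (Fin d → ℝ) :=
  (volume.restrict (cube d)).withDensity fun x => ENNReal.ofReal (Real.exp (f x) / partZ f)

/-- Essential supremum norm `‖h‖_∞` over the cube. -/
def supNormOn {d : ℕ} (h : (Fin d → ℝ) → ℝ) : ℝ :=
  essSup (fun x => |h x|) (volume.restrict (cube d))

/-- Total variation distance between two measures: `sup_A |P(A) − Q(A)|`. -/
def DTV {α : Type*} [MeasurableSpace α] (P Q : Measure α) : ℝ :=
  ⨆ A : {A : Set α // MeasurableSet A}, |(P A.1).toReal - (Q A.1).toReal|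

/-- `f` is bounded on the cube. -/
def BddOnCube {d : ℕ} (f : (Fin d → ℝ) → ℝ) : Prop := ∃ C, ∀ x ∈ cube d, |f x| ≤ C

/-! Since `f ≤ g`, the ratio `r = Z_f/Z_g` lies in `(0,1]` and `p_R = (1 - r)^n ≤ exp(-n r)`.
Mixing `P_f` with weight `1 - p_R` scales every difference `P_f(A) - P̃(A)` by `p_R`, which gives
the total variation identity. For the log-ratio, write the density ratio of `P̃` to `P_f` as
`1 - p + p e^s` with `s = (g - L_g) - (f - L_f)`: weighted AM-GM, `e^{p s} ≤ 1 - p + p e^s`,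
bounds `log (1 - p + p e^s)` below by `p s`, and `log x ≤ x - 1` together with
`1 - p + p e^s ≤ e^{|s|}` bounds it above. -/

lemma one_sub_pow_le_exp_neg_mul {r : ℝ} (hr : r ≤ 1) (n : ℕ) :
    (1 - r) ^ n ≤ exp (-n * r) := by
  calc (1 - r) ^ n ≤ exp (-r) ^ n := pow_le_pow_left₀ (by linarith) (one_sub_le_exp_neg r) n
    _ = exp (-n * r) := by rw [← exp_nat_mul]; ring_nf

lemma DTV_mix_right {α : Type*} [MeasurableSpace α] (P Q : Measure α)
    [IsFiniteMeasure P] [IsFiniteMeasure Q] {p : ℝ} (hp0 : 0 ≤ p) (hp1 : p ≤ 1) :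
    DTV P (ENNReal.ofReal (1 - p) • P + ENNReal.ofReal p • Q) = p * DTV P Q := by
  have hmix (A : Set α) :
      (P A).toReal - ((ENNReal.ofReal (1 - p) • P + ENNReal.ofReal p • Q) A).toReal =
        p * ((P A).toReal - (Q A).toReal) := by
    rw [Measure.add_apply, Measure.smul_apply, Measure.smul_apply, smul_eq_mul, smul_eq_mul,
      ENNReal.toReal_add (by finiteness) (by finiteness), ENNReal.toReal_mul, ENNReal.toReal_mul,
      ENNReal.toReal_ofReal hp0, ENNReal.toReal_ofReal (by linarith)]
    ring
  simp only [DTV, hmix, abs_mul, abs_of_nonneg hp0, Real.mul_iSup_of_nonneg hp0]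

lemma exp_mul_le_one_sub_add_mul_exp {p : ℝ} (hp0 : 0 ≤ p) (hp1 : p ≤ 1) (s : ℝ) :
    exp (p * s) ≤ 1 - p + p * exp s := by
  have h := geom_mean_le_arith_mean2_weighted (sub_nonneg.2 hp1) hp0 zero_le_one
    (exp_pos s).le (by ring)
  rwa [one_rpow, one_mul, ← exp_mul, mul_comm s p, mul_one] at h

lemma abs_log_one_sub_add_mul_exp_le {p : ℝ} (hp0 : 0 ≤ p) (hp1 : p ≤ 1) (s : ℝ) :
    |log (1 - p + p * exp s)| ≤ min |s| (p * (exp |s| - 1)) := by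
  set W := 1 - p + p * exp s
  have hW : exp (p * s) ≤ W := exp_mul_le_one_sub_add_mul_exp hp0 hp1 s
  have hWpos : 0 < W := (exp_pos _).trans_le hW
  have hs : |s| ≤ exp |s| - 1 := by linarith [add_one_le_exp |s|]
  have hexp : exp s ≤ exp |s| := exp_le_exp.2 (le_abs_self s)
  have hlow : p * s ≤ log W := by
    simpa only [log_exp] using log_le_log (exp_pos _) hW
  have hps : p * |s| ≤ min |s| (p * (exp |s| - 1)) :=
    le_min (mul_le_of_le_one_left (abs_nonneg s) hp1) (mul_le_mul_of_nonneg_left hs hp0)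
  have hup : log W ≤ min |s| (p * (exp |s| - 1)) := by
    refine le_min ?_ ?_
    · rw [log_le_iff_le_exp hWpos]
      nlinarith [one_le_exp (abs_nonneg s)]
    · nlinarith [log_le_sub_one_of_pos hWpos]
  exact abs_le.2 ⟨by nlinarith [neg_abs_le s], hup⟩

lemma abs_log_mix_exp_sub_le {p : ℝ} (hp0 : 0 ≤ p) (hp1 : p ≤ 1) (a b : ℝ) :
    |log ((1 - p) * exp a + p * exp b) - a| ≤ min |a - b| (p * (exp |a - b| - 1)) := by
  have hpos : 0 < 1 - p + p * exp (b - a) :=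
    (exp_pos _).trans_le (exp_mul_le_one_sub_add_mul_exp hp0 hp1 _)
  have hmix : (1 - p) * exp a + p * exp b = exp a * (1 - p + p * exp (b - a)) := by
    rw [exp_sub]; field_simp
  rw [hmix, log_mul (exp_ne_zero a) hpos.ne', log_exp, add_sub_cancel_left, abs_sub_comm a b]
  exact abs_log_one_sub_add_mul_exp_le hp0 hp1 (b - a)

section Cube

variable {d : ℕ}

lemma volume_cube : volume (cube d) = 1 := by
  simp [cube, Real.volume_Icc_pi]

instance isProbabilityMeasure_volume_restrict_cube :
    IsProbabilityMeasure (volume.restrict (cube d)) :=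
  ⟨by rw [Measure.restrict_apply_univ, volume_cube]⟩

lemma BddOnCube.sub {f g : (Fin d → ℝ) → ℝ} (hf : BddOnCube f) (hg : BddOnCube g) :
    BddOnCube fun x => f x - g x := by
  obtain ⟨C, hC⟩ := hf
  obtain ⟨D, hD⟩ := hg
  exact ⟨C + D, fun x hx => (abs_sub _ _).trans (add_le_add (hC x hx) (hD x hx))⟩

lemma bddOnCube_const (c : ℝ) : BddOnCube fun _ : Fin d → ℝ => c :=
  ⟨|c|, fun _ _ => le_rfl⟩

lemma BddOnCube.integrableOn_exp {f : (Fin d → ℝ) → ℝ} (hfb : BddOnCube f)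
    (hfm : Measurable f) : IntegrableOn (fun x => exp (f x)) (cube d) := by
  obtain ⟨C, hC⟩ := hfb
  refine Integrable.mono' (integrable_const (exp C)) (hfm.exp.aestronglyMeasurable) ?_
  filter_upwards [ae_restrict_mem measurableSet_Icc] with x hx
  rw [norm_of_nonneg (exp_pos _).le]
  exact exp_le_exp.2 ((le_abs_self _).trans (hC x hx))

lemma partZ_mono {f g : (Fin d → ℝ) → ℝ} (hf : IntegrableOn (fun x => exp (f x)) (cube d))
    (hg : IntegrableOn (fun x => exp (g x)) (cube d)) (hfg : ∀ x ∈ cube d, f x ≤ g x) :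
    partZ f ≤ partZ g :=
  setIntegral_mono_on hf hg measurableSet_Icc fun x hx => exp_le_exp.2 (hfg x hx)

lemma isProbabilityMeasure_gibbs {f : (Fin d → ℝ) → ℝ}
    (hf : IntegrableOn (fun x => exp (f x)) (cube d)) : IsProbabilityMeasure (gibbs f) :=
  isProbabilityMeasure_tilted (μ := volume.restrict (cube d)) hf

lemma ae_abs_le_supNormOn {h : (Fin d → ℝ) → ℝ} (hb : BddOnCube h) :
    ∀ᵐ x ∂volume.restrict (cube d), |h x| ≤ supNormOn h := by
  obtain ⟨C, hC⟩ := hb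
  refine ae_le_essSup ⟨C, Filter.eventually_map.2 ?_⟩
  filter_upwards [ae_restrict_mem measurableSet_Icc] with x hx using hC x hx

lemma supNormOn_le_of_ae_le {h : (Fin d → ℝ) → ℝ} {c : ℝ}
    (hc : ∀ᵐ x ∂volume.restrict (cube d), |h x| ≤ c) : supNormOn h ≤ c :=
  essSup_le_of_ae_le c hc (Filter.isCoboundedUnder_le_of_le _ fun x => abs_nonneg (h x))

lemma supNormOn_log_mix_le {u v : (Fin d → ℝ) → ℝ} (huv : BddOnCube fun x => u x - v x)
    {p : ℝ} (hp0 : 0 ≤ p) (hp1 : p ≤ 1) :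
    supNormOn (fun x => log ((1 - p) * exp (u x) + p * exp (v x)) - u x) ≤
      min (supNormOn fun x => u x - v x)
        (p * (exp (supNormOn fun x => u x - v x) - 1)) := by
  refine supNormOn_le_of_ae_le ?_
  filter_upwards [ae_abs_le_supNormOn huv] with x hx
  refine (abs_log_mix_exp_sub_le hp0 hp1 (u x) (v x)).trans (min_le_min hx ?_)
  gcongr

end Cube

theorem rejection_sampling_bounds_general (d n : ℕ) (f g : (Fin d → ℝ) → ℝ)
    (hfm : Measurable f) (hgm : Measurable g)
    (hfb : BddOnCube f) (hgb : BddOnCube g)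
    (hfg : ∀ x ∈ cube d, f x ≤ g x)
    (pR : ℝ) (hpR : pR = (1 - partZ f / partZ g) ^ n)
    (Pt : Measure (Fin d → ℝ))
    (hPt : Pt = ENNReal.ofReal (1 - pR) • gibbs f + ENNReal.ofReal pR • gibbs g) :
    pR ≤ Real.exp (-(n : ℝ) * (partZ f / partZ g)) ∧
    DTV (gibbs f) Pt = pR * DTV (gibbs f) (gibbs g) ∧
    supNormOn (fun x =>
        Real.log ((1 - pR) * Real.exp (f x - logPart f) + pR * Real.exp (g x - logPart g))
          - (f x - logPart f)) ≤
      min (supNormOn (fun x => (f x - logPart f) - (g x - logPart g)))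
        (pR * (Real.exp (supNormOn (fun x => (f x - logPart f) - (g x - logPart g))) - 1)) := by
  have hfi := hfb.integrableOn_exp hfm
  have hgi := hgb.integrableOn_exp hgm
  have := isProbabilityMeasure_gibbs hfi
  have := isProbabilityMeasure_gibbs hgi
  have hZg : 0 < partZ g := integral_exp_pos hgi
  have hr0 : 0 ≤ partZ f / partZ g := div_nonneg (integral_exp_pos hfi).le hZg.le
  have hr1 : partZ f / partZ g ≤ 1 := div_le_one_of_le₀ (partZ_mono hfi hgi hfg) hZg.le
  have hpR0 : 0 ≤ pR := hpR ▸ pow_nonneg (sub_nonneg.2 hr1) n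
  have hpR1 : pR ≤ 1 := hpR ▸ pow_le_one₀ (sub_nonneg.2 hr1) (by linarith)
  refine ⟨hpR ▸ one_sub_pow_le_exp_neg_mul hr1 n, hPt ▸ DTV_mix_right _ _ hpR0 hpR1, ?_⟩
  exact supNormOn_log_mix_le
    ((hfb.sub (bddOnCube_const _)).sub (hgb.sub (bddOnCube_const _))) hpR0 hpR1

/-- Lemma 2.9, general rejection sampling bound.
For bounded measurable `f ≤ g` on `X = [0,1]^d`, `n ∈ ℕ`, `p_R := (1 − Z_f/Z_g)^n`, and the
output distribution `P̃ := (1 − p_R) P_f + p_R P_g` of rejection sampling limited to `n` trials: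
(i) `p_R ≤ exp(−n Z_f/Z_g)`;
(ii) `D_TV(P_f, P̃) = p_R · D_TV(P_f, P_g)`;
(iii) `D_suplog(P_f, P̃) ≤ min{D_suplog(P_f, P_g), p_R (exp(D_suplog(P_f, P_g)) − 1)}`,
where `D_suplog(P_f, P̃)` is the essential sup over `X` of the absolute log-ratio of the
density `(1−p_R) e^{f−L_f} + p_R e^{g−L_g}` of `P̃` to the density `e^{f−L_f}` of `P_f`. -/
theorem rejection_sampling_bounds (d n : ℕ) (hd : 1 ≤ d) (f g : (Fin d → ℝ) → ℝ)
    (hfm : Measurable f) (hgm : Measurable g)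
    (hfb : BddOnCube f) (hgb : BddOnCube g)
    (hfg : ∀ x ∈ cube d, f x ≤ g x)
    (pR : ℝ) (hpR : pR = (1 - partZ f / partZ g) ^ n)
    (Pt : Measure (Fin d → ℝ))
    (hPt : Pt = ENNReal.ofReal (1 - pR) • gibbs f + ENNReal.ofReal pR • gibbs g) :
    pR ≤ Real.exp (-(n : ℝ) * (partZ f / partZ g)) ∧
    DTV (gibbs f) Pt = pR * DTV (gibbs f) (gibbs g) ∧
    supNormOn (fun x =>
        Real.log ((1 - pR) * Real.exp (f x - logPart f) + pR * Real.exp (g x - logPart g))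
          - (f x - logPart f)) ≤
      min (supNormOn (fun x => (f x - logPart f) - (g x - logPart g)))
        (pR * (Real.exp (supNormOn (fun x => (f x - logPart f) - (g x - logPart g))) - 1)) :=
  rejection_sampling_bounds_general d n f g hfm hgm hfb hgb hfg pR hpR Pt hPt
end
end

section
/- Let d ≥ 1, m ≥ 1, X = [0,1]^d, and let f ∈ C^m(X). Let p_f(x) := exp(f(x))/Z_f be the normalized Gibbs density. Then ‖p_f‖_{C^m} ≤ 2^{m(m−1)/2} · max{1, ‖f‖_{C^m}}^m · (1 + 3·d^{−1/2}·|f|₁)^d. -/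
open MeasureTheory Real

noncomputable section

/-- Partial derivative of `h` in coordinate direction `i`. -/
def pderivCoord {d : ℕ} (i : Fin d) (h : (Fin d → ℝ) → ℝ) : (Fin d → ℝ) → ℝ :=
  fun x => deriv (fun t => h (Function.update x i t)) (x i)

/-- Mixed partial derivative `∂^α h` for a multi-index `α ∈ ℕ₀^d`. -/
def pderivMulti {d : ℕ} (α : Fin d → ℕ) (h : (Fin d → ℝ) → ℝ) : (Fin d → ℝ) → ℝ :=
  (List.finRange d).foldr (fun i acc => (pderivCoord i)^[α i] acc) h

/-- The `C^m` norm on the cube: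
`‖h‖_{C^m} = sup_{α : |α|₁ ≤ m} sup_{x ∈ [0,1]^d} |∂^α h(x)|`. -/
def CmNorm {d : ℕ} (m : ℕ) (h : (Fin d → ℝ) → ℝ) : ℝ :=
  ⨆ α : {α : Fin d → ℕ // ∑ i, α i ≤ m}, ⨆ x : cube d, |pderivMulti α.1 h x.1|

/-! Differentiating `e^f` one coordinate at a time gives `∂^α e^f = Q_α e^f`, where `Q_α` is a sum
of at most `|α|!` products of at most `|α|` partial derivatives `∂^β f` with `|β| ≤ |α|`: each new
derivative either falls on `e^f`, adding a factor `∂ᵢ f`, or on one of the existing factors.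
Hence `|Q_α| ≤ |α|! max(1, ‖f‖_{C^m})^|α|`, and `|α|! ≤ m! ≤ 2^(m(m-1)/2)`.
For the normalisation, the Lipschitz bound gives `f ≥ f(x) - K √d s` on a subcube of side `s`
containing `x`, so `Z_f ≥ e^(f(x) - K √d s) s^d`; the choice `s = (1 + K/√d)⁻¹` together with
`e^t ≤ 1 + 2t` on `[0, 1]` turns this into `e^f(x) ≤ Z_f (1 + 3K/√d)^d`. -/

open Function (update)
open scoped Nat

section PartialDerivatives

variable {d : ℕ}

theorem hasDerivAt_comp_update {h : (Fin d → ℝ) → ℝ} {x : Fin d → ℝ} (i : Fin d)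
    (hh : DifferentiableAt ℝ h x) :
    HasDerivAt (fun t => h (update x i t)) (fderiv ℝ h x (Pi.single i 1)) (x i) := by
  refine HasFDerivAt.comp_hasDerivAt (x i) ?_ (hasDerivAt_update x i (x i))
  rw [Function.update_eq_self]
  exact hh.hasFDerivAt

theorem pderivCoord_apply_eq_fderiv {h : (Fin d → ℝ) → ℝ} {x : Fin d → ℝ} (i : Fin d)
    (hh : DifferentiableAt ℝ h x) : pderivCoord i h x = fderiv ℝ h x (Pi.single i 1) :=
  (hasDerivAt_comp_update i hh).deriv

theorem hasDerivAt_pderivCoord {h : (Fin d → ℝ) → ℝ} {x : Fin d → ℝ} (i : Fin d)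
    (hh : DifferentiableAt ℝ h x) :
    HasDerivAt (fun t => h (update x i t)) (pderivCoord i h x) (x i) :=
  pderivCoord_apply_eq_fderiv i hh ▸ hasDerivAt_comp_update i hh

theorem contDiff_pderivCoord {h : (Fin d → ℝ) → ℝ} {n : WithTop ℕ∞}
    (hh : ContDiff ℝ (n + 1) h) (i : Fin d) : ContDiff ℝ n (pderivCoord i h) := by
  have hd : Differentiable ℝ h := hh.differentiable (by simp)
  rw [show pderivCoord i h = fun x => fderiv ℝ h x (Pi.single i 1) from
    funext fun x => pderivCoord_apply_eq_fderiv i (hd x)]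
  exact (hh.fderiv_right le_rfl).clm_apply contDiff_const

theorem contDiff_iterate_pderivCoord {h : (Fin d → ℝ) → ℝ} {n : WithTop ℕ∞} {k : ℕ}
    (hh : ContDiff ℝ (n + k) h) (i : Fin d) : ContDiff ℝ n ((pderivCoord i)^[k] h) := by
  induction k generalizing h with
  | zero => simpa using hh
  | succ k ih =>
    rw [Function.iterate_succ_apply]
    refine ih (contDiff_pderivCoord ?_ i)
    rwa [add_assoc, ← Nat.cast_add_one]

theorem pderivCoord_div_const (i : Fin d) (g : (Fin d → ℝ) → ℝ) (c : ℝ) :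
    pderivCoord i (fun x => g x / c) = fun x => pderivCoord i g x / c :=
  funext fun _ => deriv_div_const c

def pderivList (l : List (Fin d)) (α : Fin d → ℕ) (h : (Fin d → ℝ) → ℝ) : (Fin d → ℝ) → ℝ :=
  l.foldr (fun i acc => (pderivCoord i)^[α i] acc) h

@[simp]
theorem pderivList_nil (α : Fin d → ℕ) (h : (Fin d → ℝ) → ℝ) : pderivList [] α h = h := rfl

@[simp]
theorem pderivList_cons (j : Fin d) (l : List (Fin d)) (α : Fin d → ℕ) (h : (Fin d → ℝ) → ℝ) :
    pderivList (j :: l) α h = (pderivCoord j)^[α j] (pderivList l α h) := rfl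

theorem pderivMulti_eq_pderivList (α : Fin d → ℕ) (h : (Fin d → ℝ) → ℝ) :
    pderivMulti α h = pderivList (List.finRange d) α h := rfl

theorem pderivList_congr {l : List (Fin d)} {α α' : Fin d → ℕ} (hα : ∀ j ∈ l, α j = α' j)
    (h : (Fin d → ℝ) → ℝ) : pderivList l α h = pderivList l α' h := by
  induction l with
  | nil => rfl
  | cons j l ih =>
    simp only [List.mem_cons, forall_eq_or_imp] at hα
    simp only [pderivList_cons, hα.1, ih hα.2]

theorem pderivList_div_const (l : List (Fin d)) (α : Fin d → ℕ) (g : (Fin d → ℝ) → ℝ) (c : ℝ) :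
    pderivList l α (fun x => g x / c) = fun x => pderivList l α g x / c := by
  have hcomm (i : Fin d) : Function.Commute (pderivCoord i) (fun g x => g x / c) :=
    fun g => pderivCoord_div_const i g c
  induction l with
  | nil => rfl
  | cons j l ih => rw [pderivList_cons, ih, ((hcomm j).iterate_left (α j)) _, pderivList_cons]

theorem pderivMulti_div_const (α : Fin d → ℕ) (g : (Fin d → ℝ) → ℝ) (c : ℝ) :
    pderivMulti α (fun x => g x / c) = fun x => pderivMulti α g x / c :=
  pderivList_div_const _ α g c

theorem contDiff_pderivList {h : (Fin d → ℝ) → ℝ} {n : WithTop ℕ∞} {l : List (Fin d)}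
    {α : Fin d → ℕ} (hh : ContDiff ℝ (n + (l.map α).sum) h) :
    ContDiff ℝ n (pderivList l α h) := by
  induction l generalizing n with
  | nil => simpa using hh
  | cons j l ih =>
    refine contDiff_iterate_pderivCoord (ih ?_) j
    simpa [add_assoc, add_comm (α j : WithTop ℕ∞)] using hh

theorem contDiff_pderivMulti {h : (Fin d → ℝ) → ℝ} {n : WithTop ℕ∞} {α : Fin d → ℕ}
    (hh : ContDiff ℝ (n + (∑ j, α j : ℕ)) h) : ContDiff ℝ n (pderivMulti α h) :=
  contDiff_pderivList (by rwa [← Fin.sum_univ_def])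

theorem pderivList_add_single {l : List (Fin d)} {α : Fin d → ℕ} {i : Fin d}
    (hl : l.Pairwise (· < ·)) (hi : i ∈ l) (hα : ∀ j ∈ l, j < i → α j = 0)
    (h : (Fin d → ℝ) → ℝ) :
    pderivList l (α + Pi.single i 1) h = pderivCoord i (pderivList l α h) := by
  induction l with
  | nil => simp at hi
  | cons j l ih =>
    rw [List.pairwise_cons] at hl
    simp only [List.mem_cons, forall_eq_or_imp] at hi hα
    simp only [pderivList_cons, Pi.add_apply]
    rcases lt_trichotomy j i with hji | rfl | hij
    · have hi' : i ∈ l := hi.resolve_left (ne_of_gt hji)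
      rw [hα.1 hji, Pi.single_eq_of_ne hji.ne, ih hl.2 hi' hα.2]
      rfl
    · have hl' : ∀ j' ∈ l, (α + Pi.single j 1 : Fin d → ℕ) j' = α j' := fun j' hj' => by
        simp [Pi.single_eq_of_ne (ne_of_gt (hl.1 j' hj'))]
      rw [pderivList_congr hl', Pi.single_eq_same, Function.iterate_succ_apply']
    · exact absurd (hl.1 i (hi.resolve_left (ne_of_lt hij))) (lt_asymm hij)

theorem pderivMulti_add_single {α : Fin d → ℕ} {i : Fin d} (hα : ∀ j < i, α j = 0)
    (h : (Fin d → ℝ) → ℝ) :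
    pderivMulti (α + Pi.single i 1) h = pderivCoord i (pderivMulti α h) :=
  pderivList_add_single (List.pairwise_lt_finRange d) (List.mem_finRange i)
    (fun j _ => hα j) h

theorem pderivMulti_zero (h : (Fin d → ℝ) → ℝ) : pderivMulti 0 h = h := by
  rw [pderivMulti_eq_pderivList]
  induction List.finRange d <;> simp_all

theorem pderivMulti_single (i : Fin d) (h : (Fin d → ℝ) → ℝ) :
    pderivMulti (Pi.single i 1) h = pderivCoord i h := by
  simpa [pderivMulti_zero] using pderivMulti_add_single (α := 0) (i := i) (fun _ _ => rfl) h

end PartialDerivatives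

section DerivativePolynomials

variable {d : ℕ}

def monomialVal (f : (Fin d → ℝ) → ℝ) (P : List (Fin d → ℕ)) (x : Fin d → ℝ) : ℝ :=
  (P.map fun β => pderivMulti β f x).prod

def polyVal (f : (Fin d → ℝ) → ℝ) (T : List (List (Fin d → ℕ))) (x : Fin d → ℝ) : ℝ :=
  (T.map fun P => monomialVal f P x).sum

/-- The monomials of the Leibniz rule for `∂_i ∏_{β ∈ P} ∂^β f`. -/
def leibnizTerms (i : Fin d) : List (Fin d → ℕ) → List (List (Fin d → ℕ))
  | [] => []
  | β :: P => ((β + Pi.single i 1) :: P) :: (leibnizTerms i P).map (β :: ·)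

/-- The monomials of `∂_i (Q e^f) / e^f` when `Q` has monomials `T`. -/
def expDerivTerms (i : Fin d) (T : List (List (Fin d → ℕ))) : List (List (Fin d → ℕ)) :=
  T.map (Pi.single i 1 :: ·) ++ T.flatMap (leibnizTerms i)

structure PolyBounded (k : ℕ) (T : List (List (Fin d → ℕ))) : Prop where
  length_le : T.length ≤ k.factorial
  degree_le : ∀ P ∈ T, P.length ≤ k
  order_le : ∀ P ∈ T, ∀ β ∈ P, ∑ j, β j ≤ k

/-- `pderivMulti` differentiates in the fixed order of `List.finRange d`, so without Schwarz's
theorem `∂_i ∂^β = ∂^(β + eᵢ)` holds only when `β` vanishes on the coordinates below `i`. -/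
def VanishBelow (i : Fin d) (T : List (List (Fin d → ℕ))) : Prop :=
  ∀ P ∈ T, ∀ β ∈ P, ∀ j < i, β j = 0

@[simp]
theorem monomialVal_nil (f : (Fin d → ℝ) → ℝ) (x : Fin d → ℝ) : monomialVal f [] x = 1 := rfl

@[simp]
theorem monomialVal_cons (f : (Fin d → ℝ) → ℝ) (β : Fin d → ℕ) (P : List (Fin d → ℕ))
    (x : Fin d → ℝ) : monomialVal f (β :: P) x = pderivMulti β f x * monomialVal f P x := by
  simp [monomialVal]

@[simp]
theorem polyVal_nil (f : (Fin d → ℝ) → ℝ) (x : Fin d → ℝ) : polyVal f [] x = 0 := rfl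

@[simp]
theorem polyVal_cons (f : (Fin d → ℝ) → ℝ) (P : List (Fin d → ℕ)) (T : List (List (Fin d → ℕ)))
    (x : Fin d → ℝ) : polyVal f (P :: T) x = monomialVal f P x + polyVal f T x := by
  simp [polyVal]

@[simp]
theorem polyVal_append (f : (Fin d → ℝ) → ℝ) (T T' : List (List (Fin d → ℕ))) (x : Fin d → ℝ) :
    polyVal f (T ++ T') x = polyVal f T x + polyVal f T' x := by
  simp [polyVal]

@[simp]
theorem polyVal_map_cons (f : (Fin d → ℝ) → ℝ) (β : Fin d → ℕ) (T : List (List (Fin d → ℕ)))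
    (x : Fin d → ℝ) : polyVal f (T.map (β :: ·)) x = pderivMulti β f x * polyVal f T x := by
  simp [polyVal, monomialVal, Function.comp_def, List.sum_map_mul_left]

theorem length_leibnizTerms (i : Fin d) (P : List (Fin d → ℕ)) :
    (leibnizTerms i P).length = P.length := by
  induction P with
  | nil => rfl
  | cons β P ih => simp [leibnizTerms, ih]

theorem mem_leibnizTerms {i : Fin d} {P Q : List (Fin d → ℕ)} (hQ : Q ∈ leibnizTerms i P) :
    Q.length = P.length ∧ ∀ γ ∈ Q, ∃ β ∈ P, γ = β ∨ γ = β + Pi.single i 1 := by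
  induction P generalizing Q with
  | nil => simp [leibnizTerms] at hQ
  | cons β P ih =>
    simp only [leibnizTerms, List.mem_cons, List.mem_map] at hQ
    rcases hQ with rfl | ⟨Q, hQ, rfl⟩
    · refine ⟨by simp, ?_⟩
      simp only [List.mem_cons, forall_eq_or_imp]
      exact ⟨⟨β, by simp⟩, fun γ hγ => ⟨γ, by simp [hγ]⟩⟩
    · obtain ⟨hlen, hmem⟩ := ih hQ
      refine ⟨by simp [hlen], ?_⟩
      simp only [List.mem_cons, forall_eq_or_imp]
      refine ⟨⟨β, by simp⟩, fun γ hγ => ?_⟩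
      obtain ⟨β', hβ', h⟩ := hmem γ hγ
      exact ⟨β', by simp [hβ'], h⟩

theorem PolyBounded.expDerivTerms {k : ℕ} {T : List (List (Fin d → ℕ))} (hT : PolyBounded k T)
    (i : Fin d) : PolyBounded (k + 1) (expDerivTerms i T) := by
  have hsingle : ∑ j, (Pi.single i 1 : Fin d → ℕ) j = 1 := by simp
  refine ⟨?_, ?_, ?_⟩
  · have hsum : (T.map List.length).sum ≤ T.length * k := by
      have := List.sum_le_card_nsmul (T.map List.length) k fun n hn => by
        obtain ⟨P, hP, rfl⟩ := List.mem_map.1 hn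
        exact hT.degree_le P hP
      rwa [List.length_map, smul_eq_mul] at this
    calc (_root_.expDerivTerms i T).length = T.length + (T.map List.length).sum := by
          simp [_root_.expDerivTerms, List.length_flatMap, length_leibnizTerms]
      _ ≤ k ! * (k + 1) := by nlinarith [hT.length_le]
      _ = (k + 1)! := by rw [Nat.factorial_succ, mul_comm]
  · simp only [_root_.expDerivTerms, List.mem_append, List.mem_map, List.mem_flatMap]
    rintro _ (⟨P, hP, rfl⟩ | ⟨P, hP, hQ⟩)
    · simpa using hT.degree_le P hP
    · rw [(mem_leibnizTerms hQ).1]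
      exact (hT.degree_le P hP).trans k.le_succ
  · simp only [_root_.expDerivTerms, List.mem_append, List.mem_map, List.mem_flatMap]
    rintro _ (⟨P, hP, rfl⟩ | ⟨P, hP, hQ⟩) γ hγ
    · rcases List.mem_cons.1 hγ with rfl | hγ
      · omega
      · exact (hT.order_le P hP γ hγ).trans k.le_succ
    · obtain ⟨β, hβ, rfl | rfl⟩ := (mem_leibnizTerms hQ).2 γ hγ
      · exact (hT.order_le P hP _ hβ).trans k.le_succ
      · simpa [Finset.sum_add_distrib] using hT.order_le P hP _ hβ

theorem VanishBelow.mono {i i' : Fin d} {T : List (List (Fin d → ℕ))} (hT : VanishBelow i T)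
    (hi : i' ≤ i) : VanishBelow i' T :=
  fun P hP β hβ j hj => hT P hP β hβ j (hj.trans_le hi)

theorem VanishBelow.expDerivTerms {i : Fin d} {T : List (List (Fin d → ℕ))}
    (hT : VanishBelow i T) : VanishBelow i (expDerivTerms i T) := by
  simp only [_root_.expDerivTerms, VanishBelow, List.mem_append, List.mem_map, List.mem_flatMap]
  rintro _ (⟨P, hP, rfl⟩ | ⟨P, hP, hQ⟩) γ hγ j hj
  · rcases List.mem_cons.1 hγ with rfl | hγ
    · exact Pi.single_eq_of_ne hj.ne _
    · exact hT P hP γ hγ j hj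
  · obtain ⟨β, hβ, rfl | rfl⟩ := (mem_leibnizTerms hQ).2 γ hγ
    · exact hT P hP _ hβ j hj
    · simp [Pi.single_eq_of_ne hj.ne, hT P hP _ hβ j hj]

end DerivativePolynomials

section ExpDerivatives

variable {d m : ℕ} {f : (Fin d → ℝ) → ℝ}

theorem hasDerivAt_pderivMulti_update (hf : ContDiff ℝ m f) {β : Fin d → ℕ} {i : Fin d}
    (hβ : ∑ j, β j < m) (hβi : ∀ j < i, β j = 0) (x : Fin d → ℝ) :
    HasDerivAt (fun t => pderivMulti β f (update x i t))
      (pderivMulti (β + Pi.single i 1) f x) (x i) := by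
  have hβ' : ContDiff ℝ (1 + (∑ j, β j : ℕ)) f := hf.of_le (by exact_mod_cast (by omega))
  rw [pderivMulti_add_single hβi]
  exact hasDerivAt_pderivCoord i ((contDiff_pderivMulti hβ').differentiable one_ne_zero x)

theorem hasDerivAt_monomialVal_update (hf : ContDiff ℝ m f) {i : Fin d}
    {P : List (Fin d → ℕ)} (hP : ∀ β ∈ P, ∑ j, β j < m ∧ ∀ j < i, β j = 0) (x : Fin d → ℝ) :
    HasDerivAt (fun t => monomialVal f P (update x i t))
      (polyVal f (leibnizTerms i P) x) (x i) := by
  induction P with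
  | nil => simpa [leibnizTerms] using hasDerivAt_const (x i) (1 : ℝ)
  | cons β P ih =>
    simp only [List.mem_cons, forall_eq_or_imp] at hP
    have h := (hasDerivAt_pderivMulti_update hf hP.1.1 hP.1.2 x).fun_mul (ih hP.2)
    rw [Function.update_eq_self] at h
    simpa [leibnizTerms] using h

theorem hasDerivAt_polyVal_update (hf : ContDiff ℝ m f) {i : Fin d}
    {T : List (List (Fin d → ℕ))} (hT : ∀ P ∈ T, ∀ β ∈ P, ∑ j, β j < m ∧ ∀ j < i, β j = 0)
    (x : Fin d → ℝ) :
    HasDerivAt (fun t => polyVal f T (update x i t))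
      (polyVal f (T.flatMap (leibnizTerms i)) x) (x i) := by
  induction T with
  | nil => simpa using hasDerivAt_const (x i) (0 : ℝ)
  | cons P T ih =>
    simp only [List.mem_cons, forall_eq_or_imp] at hT
    simpa using (hasDerivAt_monomialVal_update hf hT.1 x).fun_add (ih hT.2)

theorem pderivCoord_polyVal_mul_exp (hf : ContDiff ℝ m f) {k : ℕ}
    {T : List (List (Fin d → ℕ))} (hT : PolyBounded k T) (hk : k < m) {i : Fin d}
    (hTi : VanishBelow i T) :
    pderivCoord i (fun x => polyVal f T x * exp (f x)) =
      fun x => polyVal f (expDerivTerms i T) x * exp (f x) := by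
  funext x
  have hpoly := hasDerivAt_polyVal_update hf
    (fun P hP β hβ => ⟨(hT.order_le P hP β hβ).trans_lt hk, hTi P hP β hβ⟩) x
  have hexp := (hasDerivAt_pderivCoord i ((hf.differentiable (by exact_mod_cast (by omega : m ≠ 0))) x)).exp
  rw [Function.update_eq_self] at hexp
  refine (hpoly.mul hexp).deriv.trans ?_
  simp [expDerivTerms, pderivMulti_single, Function.update_eq_self]
  ring

theorem iterate_pderivCoord_polyVal_mul_exp (hf : ContDiff ℝ m f) {k n : ℕ}
    {T : List (List (Fin d → ℕ))} (hT : PolyBounded k T) (hkn : k + n ≤ m) {i : Fin d}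
    (hTi : VanishBelow i T) :
    ∃ T', PolyBounded (k + n) T' ∧ VanishBelow i T' ∧
      (pderivCoord i)^[n] (fun x => polyVal f T x * exp (f x)) =
        fun x => polyVal f T' x * exp (f x) := by
  induction n with
  | zero => exact ⟨T, hT, hTi, rfl⟩
  | succ n ih =>
    obtain ⟨T', hT', hT'i, heq⟩ := ih (by omega)
    refine ⟨expDerivTerms i T', hT'.expDerivTerms i, hT'i.expDerivTerms, ?_⟩
    rw [Function.iterate_succ_apply', heq, pderivCoord_polyVal_mul_exp hf hT' (by omega) hT'i]

theorem pderivList_exp_eq (hf : ContDiff ℝ m f) {α : Fin d → ℕ} {l : List (Fin d)}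
    (hl : l.Pairwise (· < ·)) (hα : (l.map α).sum ≤ m) :
    ∃ T, PolyBounded (l.map α).sum T ∧ (∀ i, (∀ j ∈ l, i ≤ j) → VanishBelow i T) ∧
      pderivList l α (fun x => exp (f x)) = fun x => polyVal f T x * exp (f x) := by
  induction l with
  | nil =>
    refine ⟨[[]], ⟨by simp, by simp, by simp⟩, fun _ _ => by simp [VanishBelow], ?_⟩
    funext x
    simp
  | cons j l ih =>
    rw [List.pairwise_cons] at hl
    simp only [List.map_cons, List.sum_cons] at hα ⊢
    obtain ⟨T, hT, hTi, heq⟩ := ih hl.2 (by omega)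
    obtain ⟨T', hT', hT'j, heq'⟩ := iterate_pderivCoord_polyVal_mul_exp (n := α j) hf hT
      (by omega) (hTi j fun j' hj' => (hl.1 j' hj').le)
    refine ⟨T', by rwa [add_comm], fun i hi => hT'j.mono (hi j (by simp)), ?_⟩
    rw [pderivList_cons, heq, heq']

theorem pderivMulti_exp_eq (hf : ContDiff ℝ m f) {α : Fin d → ℕ} (hα : ∑ j, α j ≤ m) :
    ∃ T, PolyBounded (∑ j, α j) T ∧
      pderivMulti α (fun x => exp (f x)) = fun x => polyVal f T x * exp (f x) := by
  rw [Fin.sum_univ_def] at hα ⊢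
  obtain ⟨T, hT, -, heq⟩ := pderivList_exp_eq hf (List.pairwise_lt_finRange d) hα
  exact ⟨T, hT, heq⟩

end ExpDerivatives

section Bounds

variable {d : ℕ}

theorem abs_monomialVal_le {f : (Fin d → ℝ) → ℝ} {P : List (Fin d → ℕ)} {x : Fin d → ℝ}
    {M : ℝ} (hM : 0 ≤ M) (hP : ∀ β ∈ P, |pderivMulti β f x| ≤ M) :
    |monomialVal f P x| ≤ M ^ P.length := by
  induction P with
  | nil => simp
  | cons β P ih =>
    simp only [List.mem_cons, forall_eq_or_imp] at hP
    rw [monomialVal_cons, abs_mul, List.length_cons, pow_succ']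
    exact mul_le_mul hP.1 (ih hP.2) (abs_nonneg _) hM

theorem abs_polyVal_le {f : (Fin d → ℝ) → ℝ} {k : ℕ} {T : List (List (Fin d → ℕ))}
    (hT : PolyBounded k T) {x : Fin d → ℝ} {M : ℝ} (hM : 1 ≤ M)
    (hf : ∀ β : Fin d → ℕ, ∑ j, β j ≤ k → |pderivMulti β f x| ≤ M) :
    |polyVal f T x| ≤ k ! * M ^ k := by
  have hmono : ∀ P ∈ T, |monomialVal f P x| ≤ M ^ k := fun P hP =>
    (abs_monomialVal_le (zero_le_one.trans hM) fun β hβ => hf β (hT.order_le P hP β hβ)).trans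
      (pow_le_pow_right₀ hM (hT.degree_le P hP))
  calc |polyVal f T x| ≤ (T.map fun P => |monomialVal f P x|).sum := by
        simpa [polyVal, Function.comp_def] using
          Multiset.abs_sum_le_sum_abs (s := (T.map fun P => monomialVal f P x : Multiset ℝ))
    _ ≤ T.length • M ^ k := by
        have := List.sum_le_card_nsmul (T.map fun P => |monomialVal f P x|) (M ^ k) fun y hy => by
          obtain ⟨P, hP, rfl⟩ := List.mem_map.1 hy
          exact hmono P hP
        rwa [List.length_map] at this
    _ ≤ k ! * M ^ k := by
        rw [nsmul_eq_mul]
        gcongr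
        exact_mod_cast hT.length_le

theorem finite_setOf_sum_le (d m : ℕ) : {α : Fin d → ℕ | ∑ j, α j ≤ m}.Finite :=
  (Set.finite_Iic fun _ => m).subset fun _ hα j =>
    (Finset.single_le_sum (fun _ _ => Nat.zero_le _) (Finset.mem_univ j)).trans hα

theorem abs_pderivMulti_le_cmNorm {m : ℕ} {h : (Fin d → ℝ) → ℝ} (hh : ContDiff ℝ m h)
    {β : Fin d → ℕ} (hβ : ∑ j, β j ≤ m) {x : Fin d → ℝ} (hx : x ∈ cube d) :
    |pderivMulti β h x| ≤ CmNorm m h := by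
  have hcont : Continuous (pderivMulti β h) :=
    (contDiff_pderivMulti (n := 0) (hh.of_le (by rw [zero_add]; exact_mod_cast hβ))).continuous
  have hinner : BddAbove (Set.range fun y : cube d => |pderivMulti β h y|) := by
    refine BddAbove.mono ?_ ((isCompact_Icc (a := 0) (b := 1)).bddAbove_image hcont.abs.continuousOn)
    rintro _ ⟨y, rfl⟩
    exact ⟨y, y.2, rfl⟩
  have : Finite {α : Fin d → ℕ // ∑ j, α j ≤ m} := (finite_setOf_sum_le d m).to_subtype
  exact le_ciSup_of_le (Set.finite_range _).bddAbove (⟨β, hβ⟩ : {α : Fin d → ℕ // ∑ j, α j ≤ m})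
    (le_ciSup hinner (⟨x, hx⟩ : cube d))

theorem cmNorm_le {m : ℕ} {h : (Fin d → ℝ) → ℝ} {C : ℝ}
    (hC : ∀ α : Fin d → ℕ, ∑ j, α j ≤ m → ∀ x ∈ cube d, |pderivMulti α h x| ≤ C) :
    CmNorm m h ≤ C := by
  have : Nonempty (cube d) := ⟨⟨0, Set.left_mem_Icc.2 zero_le_one⟩⟩
  have : Nonempty {α : Fin d → ℕ // ∑ j, α j ≤ m} := ⟨⟨0, by simp⟩⟩
  exact ciSup_le fun α => ciSup_le fun x => hC α.1 α.2 x.1 x.2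

theorem Nat.factorial_le_two_pow_choose_two (n : ℕ) : n ! ≤ 2 ^ n.choose 2 := by
  induction n with
  | zero => simp
  | succ n ih =>
    rw [Nat.factorial_succ, Nat.choose_succ_succ', Nat.choose_one_right, pow_add]
    exact Nat.mul_le_mul Nat.lt_two_pow_self ih

end Bounds

section PartitionFunction

variable {d : ℕ}

theorem Real.exp_mul_inv_one_add_le {a : ℝ} (ha : 0 ≤ a) :
    exp (a * (1 + a)⁻¹) ≤ (1 + a)⁻¹ * (1 + 3 * a) := by
  have h2t : (1 + a)⁻¹ * (1 + 3 * a) = 1 + 2 * (a * (1 + a)⁻¹) := by field_simp; ring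
  set t := a * (1 + a)⁻¹ with ht
  have ht0 : 0 ≤ t := by positivity
  have ht1 : t ≤ 1 := by rw [ht, ← div_eq_mul_inv, div_le_one (by positivity)]; linarith
  have hquad := (abs_le.1 (abs_exp_sub_one_sub_id_le (abs_le.2 ⟨by linarith, ht1⟩))).2
  rw [h2t]
  nlinarith

theorem exists_Icc_subset_cube {x : Fin d → ℝ} (hx : x ∈ cube d) {s : ℝ} (hs0 : 0 ≤ s)
    (hs1 : s ≤ 1) :
    ∃ a : Fin d → ℝ, x ∈ Set.Icc a (a + fun _ => s) ∧ Set.Icc a (a + fun _ => s) ⊆ cube d := by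
  have hx0 : ∀ j, 0 ≤ x j := hx.1
  have hx1 : ∀ j, x j ≤ 1 := hx.2
  refine ⟨fun j => min (x j) (1 - s), ⟨fun j => min_le_left _ _, fun j => ?_⟩,
    fun y hy => ⟨fun j => ?_, fun j => ?_⟩⟩
  · simp only [Pi.add_apply]
    rcases min_cases (x j) (1 - s) with h | h <;> linarith [hx1 j]
  · exact (le_min (hx0 j) (by linarith)).trans (hy.1 j)
  · have := hy.2 j
    simp only [Pi.add_apply] at this
    simpa using this.trans (by linarith [min_le_right (x j) (1 - s)])

theorem sqrt_sum_sq_le {v : Fin d → ℝ} {s : ℝ} (hs : 0 ≤ s) (hv : ∀ j, |v j| ≤ s) :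
    √(∑ j, v j ^ 2) ≤ √d * s := by
  rw [← Real.sqrt_sq hs, ← Real.sqrt_mul (Nat.cast_nonneg _)]
  refine Real.sqrt_le_sqrt ?_
  calc ∑ j, v j ^ 2 ≤ ∑ _j : Fin d, s ^ 2 :=
        Finset.sum_le_sum fun j _ => sq_le_sq' (abs_le.1 (hv j)).1 (abs_le.1 (hv j)).2
    _ = d * s ^ 2 := by simp

theorem integrableOn_exp_cube {f : (Fin d → ℝ) → ℝ} (hc : ContinuousOn f (cube d)) :
    IntegrableOn (fun y => exp (f y)) (cube d) :=
  (continuous_exp.comp_continuousOn hc).integrableOn_compact isCompact_Icc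

theorem partZ_pos {f : (Fin d → ℝ) → ℝ} (hc : ContinuousOn f (cube d)) : 0 < partZ f := by
  have : NeZero (volume.restrict (cube d)) :=
    ⟨by simp [cube, Measure.restrict_eq_zero, Real.volume_Icc_pi]⟩
  exact integral_exp_pos (integrableOn_exp_cube hc)

theorem exp_sub_mul_pow_le_partZ {f : (Fin d → ℝ) → ℝ} (hc : ContinuousOn f (cube d))
    {K : ℝ} (hK : 0 ≤ K)
    (hLip : ∀ x ∈ cube d, ∀ y ∈ cube d, |f x - f y| ≤ K * √(∑ i, (x i - y i) ^ 2))
    {x : Fin d → ℝ} (hx : x ∈ cube d) {s : ℝ} (hs0 : 0 ≤ s) (hs1 : s ≤ 1) :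
    exp (f x - K * (√d * s)) * s ^ d ≤ partZ f := by
  obtain ⟨a, hxa, hsub⟩ := exists_Icc_subset_cube hx hs0 hs1
  have hlow : ∀ y ∈ Set.Icc a (a + fun _ => s), exp (f x - K * (√d * s)) ≤ exp (f y) := by
    intro y hy
    have hclose : ∀ j, |x j - y j| ≤ s := fun j => by
      have := hxa.2 j
      have := hy.2 j
      simp only [Pi.add_apply] at *
      exact abs_sub_le_iff.2 ⟨by linarith [hy.1 j], by linarith [hxa.1 j]⟩
    have hLipxy := (hLip x hx y (hsub hy)).trans
      (mul_le_mul_of_nonneg_left (sqrt_sum_sq_le hs0 hclose) hK)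
    exact exp_le_exp.2 (by linarith [(abs_le.1 hLipxy).2])
  have hvol : volume.real (Set.Icc a (a + fun _ => s)) = s ^ d := by
    simp [measureReal_def, Real.volume_Icc_pi_toReal (le_add_of_nonneg_right fun _ => hs0)]
  calc exp (f x - K * (√d * s)) * s ^ d
      = exp (f x - K * (√d * s)) * volume.real (Set.Icc a (a + fun _ => s)) := by rw [hvol]
    _ ≤ ∫ y in Set.Icc a (a + fun _ => s), exp (f y) :=
        setIntegral_ge_of_const_le_real measurableSet_Icc isCompact_Icc.measure_lt_top.ne hlow
          ((integrableOn_exp_cube hc).mono_set hsub)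
    _ ≤ partZ f :=
        setIntegral_mono_set (integrableOn_exp_cube hc)
          (Filter.Eventually.of_forall fun _ => (exp_pos _).le) hsub.eventuallyLE

theorem exp_le_partZ_mul {f : (Fin d → ℝ) → ℝ} (hc : ContinuousOn f (cube d))
    {K : ℝ} (hK : 0 ≤ K)
    (hLip : ∀ x ∈ cube d, ∀ y ∈ cube d, |f x - f y| ≤ K * √(∑ i, (x i - y i) ^ 2))
    {x : Fin d → ℝ} (hx : x ∈ cube d) :
    exp (f x) ≤ partZ f * (1 + 3 * K / √d) ^ d := by
  set a := K / √d with ha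
  have ha0 : 0 ≤ a := by positivity
  have hKa : K * √d = d * a := by
    rw [ha, mul_div_assoc', mul_comm (d : ℝ) K, mul_div_assoc, Real.div_sqrt]
  -- The side `s` of the subcube around `x` balances its volume `s^d` against `e^(K √d s)`.
  set s := (1 + a)⁻¹ with hs
  have hs0 : 0 ≤ s := by positivity
  have hs1 : s ≤ 1 := inv_le_one_of_one_le₀ (by linarith)
  have hexp : exp (K * (√d * s)) ≤ s ^ d * (1 + 3 * a) ^ d := by
    rw [← mul_assoc, hKa, mul_assoc, Real.exp_nat_mul, ← mul_pow]
    exact pow_le_pow_left₀ (exp_pos _).le (Real.exp_mul_inv_one_add_le ha0) d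
  calc exp (f x) = exp (f x - K * (√d * s)) * exp (K * (√d * s)) := by
        rw [← exp_add, sub_add_cancel]
    _ ≤ exp (f x - K * (√d * s)) * s ^ d * (1 + 3 * a) ^ d := by
        rw [mul_assoc]
        gcongr
    _ ≤ partZ f * (1 + 3 * a) ^ d := by
        gcongr
        exact exp_sub_mul_pow_le_partZ hc hK hLip hx hs0 hs1
    _ = partZ f * (1 + 3 * K / √d) ^ d := by rw [ha, mul_div_assoc]

end PartitionFunction

theorem cmNorm_gibbs_density_le_general (d m : ℕ)
    (f : (Fin d → ℝ) → ℝ) (hf : ContDiff ℝ m f)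
    (K : ℝ) (hK : 0 ≤ K)
    (hLip : ∀ x ∈ cube d, ∀ y ∈ cube d,
      |f x - f y| ≤ K * Real.sqrt (∑ i, (x i - y i) ^ 2)) :
    CmNorm m (fun x => Real.exp (f x) / partZ f) ≤
      2 ^ (m * (m - 1) / 2) * max 1 (CmNorm m f) ^ m * (1 + 3 * K / Real.sqrt d) ^ d := by
  set M := max 1 (CmNorm m f)
  have hZ : 0 < partZ f := partZ_pos hf.continuous.continuousOn
  refine cmNorm_le fun α hα x hx => ?_
  obtain ⟨T, hT, hexp⟩ := pderivMulti_exp_eq hf hα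
  have hpoly : |polyVal f T x| ≤ 2 ^ (m * (m - 1) / 2) * M ^ m := by
    have hfact : ((∑ j, α j) ! : ℝ) ≤ 2 ^ (m * (m - 1) / 2) := by
      rw [← Nat.choose_two_right]
      exact_mod_cast (Nat.factorial_le hα).trans (Nat.factorial_le_two_pow_choose_two m)
    refine (abs_polyVal_le hT (le_max_left 1 (CmNorm m f)) fun β hβ => ?_).trans ?_
    · exact (abs_pderivMulti_le_cmNorm hf (hβ.trans hα) hx).trans (le_max_right _ _)
    · gcongr
      exact le_max_left _ _
  have hgibbs : exp (f x) / partZ f ≤ (1 + 3 * K / √d) ^ d := by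
    rw [div_le_iff₀ hZ, mul_comm]
    exact exp_le_partZ_mul hf.continuous.continuousOn hK hLip hx
  rw [pderivMulti_div_const, hexp, abs_div, abs_mul, abs_of_pos (exp_pos _), abs_of_pos hZ,
    mul_div_assoc]
  exact mul_le_mul hpoly hgibbs (by positivity) (by positivity)

/-- upper bound of Theorem 4.2: for `f ∈ C^m([0,1]^d)` with `m ≥ 1` and
(minimal) Lipschitz constant `K` w.r.t. the Euclidean norm, the normalized Gibbs density
`p_f = e^f / Z_f` satisfies
`‖p_f‖_{C^m} ≤ 2^{m(m−1)/2} max{1, ‖f‖_{C^m}}^m (1 + 3 d^{−1/2} K)^d`. -/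
theorem cmNorm_gibbs_density_le (d m : ℕ) (hd : 1 ≤ d) (hm : 1 ≤ m)
    (f : (Fin d → ℝ) → ℝ) (hf : ContDiff ℝ m f)
    (K : ℝ) (hK : 0 ≤ K)
    (hLip : ∀ x ∈ cube d, ∀ y ∈ cube d,
      |f x - f y| ≤ K * Real.sqrt (∑ i, (x i - y i) ^ 2)) :
    CmNorm m (fun x => Real.exp (f x) / partZ f) ≤
      2 ^ (m * (m - 1) / 2) * max 1 (CmNorm m f) ^ m * (1 + 3 * K / Real.sqrt d) ^ d :=
  cmNorm_gibbs_density_le_general d m f hf K hK hLip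
end
end
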